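/- arXiv:1202.3329 — 2 statements merged into one kernel-verified Lean document; each statement's English description precedes it below -/
import Mathlib

section
/- If σ and τ are commuting density matrices with σ ⪰ τ, then there exist nonnegative reals p_k summing to 1 and unitary permutation operators P_k (permuting a common eigenbasis) such that τ = Σ_k p_k P_k σ P_k*, and the family f_k = √(p_k) P_k is a bi-stochastic measurement realizing τ from σ. -/
/-!
A common orthonormal eigenbasis of the commuting Hermitian matrices `σ`, `τ` writes them as
`U diag(a) U*` and `U diag(b) U*`; `a` and `b` are rearrangements of the two spectra, so `a`
majorizes `b`. By Rado's theorem `b` is then a convex combination of rearrangements `a ∘ ρ_k`: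
while the sorted vectors differ, transferring mass from a coordinate where `d` has an excess over
`c` to the first one where it has a deficit keeps the partial-sum inequalities, fixes one more
coordinate, and stays in the convex hull of the rearrangements of `d`, being a convex combination
of `d` and `d` composed with a transposition. The unitaries are the permutation matrices of the
`ρ_k` conjugated by `U`.
-/

open scoped ComplexOrder

open Matrix Finset in
/-- `u` rearranged in decreasing order. -/
noncomputable def sortDesc {n : ℕ} (u : Fin n → ℝ) : Fin n → ℝ :=
  fun i => u (Tuple.sort u i.rev)

open Finset in
/-- `u` majorizes `v`: every partial sum of the decreasing rearrangement of `u`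
dominates that of `v`, and the total sums agree. -/
noncomputable def Majorizes {n : ℕ} (u v : Fin n → ℝ) : Prop :=
  (∀ k : ℕ, ∑ i ∈ Finset.univ.filter (fun i : Fin n => (i : ℕ) < k), sortDesc v i ≤
      ∑ i ∈ Finset.univ.filter (fun i : Fin n => (i : ℕ) < k), sortDesc u i) ∧
  ∑ i, u i = ∑ i, v i

open Finset Matrix

section Rearrangement

variable {n : ℕ}

theorem antitone_sortDesc (u : Fin n → ℝ) : Antitone (sortDesc u) :=
  fun _ _ hij => Tuple.monotone_sort u (Fin.rev_le_rev.mpr hij)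

theorem exists_perm_sortDesc_eq_comp (u : Fin n → ℝ) :
    ∃ e : Equiv.Perm (Fin n), sortDesc u = u ∘ e :=
  ⟨Fin.revPerm.trans (Tuple.sort u), rfl⟩

theorem sortDesc_eq_of_map_univ_eq {u v : Fin n → ℝ}
    (h : univ.val.map u = univ.val.map v) : sortDesc u = sortDesc v := by
  obtain ⟨e, he⟩ := exists_perm_sortDesc_eq_comp u
  obtain ⟨f, hf⟩ := exists_perm_sortDesc_eq_comp v
  have hperm : (List.ofFn (sortDesc u)).Perm (List.ofFn (sortDesc v)) := by
    rw [he, hf]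
    refine (e.ofFn_comp_perm u).trans (.trans ?_ (f.ofFn_comp_perm v).symm)
    simpa [Fin.univ_val_map] using h
  exact List.ofFn_injective <| hperm.eq_of_sortedGE
    (antitone_sortDesc u).sortedGE_ofFn (antitone_sortDesc v).sortedGE_ofFn

theorem Majorizes.of_map_univ_eq {u v u' v' : Fin n → ℝ} (huv : Majorizes u v)
    (hu : univ.val.map u = univ.val.map u') (hv : univ.val.map v = univ.val.map v') :
    Majorizes u' v' := by
  refine ⟨?_, ?_⟩
  · rw [← sortDesc_eq_of_map_univ_eq hu, ← sortDesc_eq_of_map_univ_eq hv]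
    exact huv.1
  · rw [sum_eq_multiset_sum, sum_eq_multiset_sum, ← hu, ← hv]
    exact huv.2

end Rearrangement

section Permutohedron

variable {ι : Type*}

def permutohedron (u : ι → ℝ) : Set (ι → ℝ) :=
  convexHull ℝ (Set.range fun ρ : Equiv.Perm ι => u ∘ ρ)

theorem comp_perm_mem_permutohedron (u : ι → ℝ) (ρ : Equiv.Perm ι) :
    u ∘ ρ ∈ permutohedron u :=
  subset_convexHull ℝ _ ⟨ρ, rfl⟩

theorem self_mem_permutohedron (u : ι → ℝ) : u ∈ permutohedron u :=
  comp_perm_mem_permutohedron u 1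

theorem comp_perm_mem_permutohedron_of_mem {u v : ι → ℝ} (hv : v ∈ permutohedron u)
    (ρ : Equiv.Perm ι) : v ∘ ρ ∈ permutohedron u := by
  have hρ := Set.mem_image_of_mem (LinearMap.funLeft ℝ ℝ ρ) hv
  rw [permutohedron, LinearMap.image_convexHull, ← Set.range_comp] at hρ
  refine convexHull_mono ?_ hρ
  rintro _ ⟨σ, rfl⟩
  exact ⟨σ * ρ, rfl⟩

theorem permutohedron_subset_of_mem {u v : ι → ℝ} (hv : v ∈ permutohedron u) :
    permutohedron v ⊆ permutohedron u :=
  convexHull_min (Set.range_subset_iff.2 (comp_perm_mem_permutohedron_of_mem hv))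
    (convex_convexHull ℝ _)

theorem add_single_sub_single_mem_permutohedron [DecidableEq ι] {d : ι → ℝ} {j k : ι}
    (hjk : d k < d j) {δ : ℝ} (hδ₀ : 0 ≤ δ) (hδ : δ ≤ d j - d k) :
    d + Pi.single k δ - Pi.single j δ ∈ permutohedron d := by
  have hne : j ≠ k := by
    rintro rfl
    exact lt_irrefl _ hjk
  set s := δ / (d j - d k)
  have hs : s * (d j - d k) = δ := div_mul_cancel₀ _ (by linarith)
  have hs₀ : 0 ≤ s := div_nonneg hδ₀ (by linarith)
  have hs₁ : s ≤ 1 := div_le_one_of_le₀ hδ (by linarith)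
  have hT : d + Pi.single k δ - Pi.single j δ = (1 - s) • d + s • (d ∘ Equiv.swap j k) := by
    ext i
    rcases eq_or_ne i j with rfl | hij
    · simp [hne]
      linarith
    rcases eq_or_ne i k with rfl | hik
    · simp [hij]
      linarith
    simp [hij, hik, Equiv.swap_apply_of_ne_of_ne hij hik]
    ring
  rw [hT]
  exact convex_convexHull ℝ _ (self_mem_permutohedron d) (comp_perm_mem_permutohedron d _)
    (by linarith) hs₀ (by ring)

theorem card_filter_ne_add_single_sub_single_lt [Fintype ι] [DecidableEq ι] {c d : ι → ℝ}
    {j k : ι} (hjk : j ≠ k) (hj : d j ≠ c j) (hk : d k ≠ c k) {δ : ℝ}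
    (hδ : δ = d j - c j ∨ δ = c k - d k) :
    #{i | (d + Pi.single k δ - Pi.single j δ : ι → ℝ) i ≠ c i} < #{i | d i ≠ c i} := by
  apply card_lt_card
  rw [Finset.ssubset_iff_of_subset]
  · rcases hδ with rfl | rfl
    · exact ⟨j, by simpa using hj, by simp [hjk]⟩
    · exact ⟨k, by simpa using hk, by simp [hjk]⟩
  · intro i
    rcases eq_or_ne i j with rfl | hij
    · simp [hj]
    rcases eq_or_ne i k with rfl | hik
    · simp [hk]
    simp [hij, hik]

end Permutohedron

section PrefixSum

variable {n : ℕ}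

def prefixSum (u : Fin n → ℝ) (m : ℕ) : ℝ :=
  ∑ i ∈ univ.filter (fun i : Fin n => (i : ℕ) < m), u i

theorem prefixSum_succ (u : Fin n → ℝ) (k : Fin n) :
    prefixSum u (k + 1) = prefixSum u k + u k := by
  have hinsert : univ.filter (fun i : Fin n => (i : ℕ) < k + 1)
      = insert k (univ.filter fun i : Fin n => (i : ℕ) < k) := by
    ext i
    simp only [mem_filter, mem_univ, true_and, mem_insert, Fin.ext_iff]
    omega
  rw [prefixSum, prefixSum, hinsert, sum_insert (by simp), add_comm]

theorem prefixSum_add_single_sub_single (d : Fin n → ℝ) (j k : Fin n) (δ : ℝ) (m : ℕ) :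
    prefixSum (d + Pi.single k δ - Pi.single j δ) m
      = prefixSum d m + (if (k : ℕ) < m then δ else 0) - (if (j : ℕ) < m then δ else 0) := by
  simp [prefixSum, sum_add_distrib, sum_sub_distrib, sum_pi_single']

variable {c d : Fin n → ℝ}

theorem exists_transfer_indices (hpre : ∀ m, prefixSum c m ≤ prefixSum d m)
    (hsum : ∑ i, d i = ∑ i, c i) (hne : d ≠ c) :
    ∃ j k, j < k ∧ c j < d j ∧ d k < c k ∧ ∀ i < k, c i ≤ d i := by
  have hdef : (univ.filter fun i => d i < c i).Nonempty := by
    by_contra! h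
    refine hne (funext fun i => ?_)
    refine ((sum_eq_sum_iff_of_le fun i _ => ?_).1 hsum.symm i (mem_univ i)).symm
    simpa using filter_eq_empty_iff.1 h (mem_univ i)
  obtain ⟨k, hk, hkmin⟩ := exists_min_image _ id hdef
  have hle : ∀ i < k, c i ≤ d i := fun i hik =>
    not_lt.1 fun hi => (hkmin i (by simpa using hi)).not_gt hik
  have hk : d k < c k := by simpa using hk
  have hlt : prefixSum c k < prefixSum d k := by
    have := hpre (k + 1)
    rw [prefixSum_succ, prefixSum_succ] at this
    linarith
  obtain ⟨j, hj, hcj⟩ := exists_lt_of_sum_lt hlt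
  exact ⟨j, k, by simpa using hj, hcj, hk, hle⟩

theorem prefixSum_le_add_single_sub_single {j k : Fin n} (hjk : j < k) {δ : ℝ}
    (hδ : δ ≤ d j - c j) (hle : ∀ i < k, c i ≤ d i)
    (hpre : ∀ m, prefixSum c m ≤ prefixSum d m) (m : ℕ) :
    prefixSum c m ≤ prefixSum (d + Pi.single k δ - Pi.single j δ) m := by
  rw [prefixSum_add_single_sub_single]
  by_cases hk : (k : ℕ) < m
  · have hj : (j : ℕ) < m := lt_trans hjk hk
    simpa [hk, hj] using hpre m
  by_cases hj : (j : ℕ) < m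
  · -- the indices below `m` all lie below `k`, where `d` dominates `c` termwise
    have hgap : d j - c j ≤ prefixSum d m - prefixSum c m := by
      rw [prefixSum, prefixSum, ← sum_sub_distrib]
      refine single_le_sum (f := fun i => d i - c i) (fun i hi => sub_nonneg.2 (hle i ?_))
        (by simpa using hj)
      exact Fin.lt_def.2 (by simp at hi; omega)
    simp only [hk, hj, if_false, if_true]
    linarith
  · simpa [hk, hj] using hpre m

theorem exists_transfer_step (hc : Antitone c) (hpre : ∀ m, prefixSum c m ≤ prefixSum d m)
    (hsum : ∑ i, d i = ∑ i, c i) (hne : d ≠ c) :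
    ∃ d' ∈ permutohedron d, (∀ m, prefixSum c m ≤ prefixSum d' m) ∧
      ∑ i, d' i = ∑ i, c i ∧ #{i | d' i ≠ c i} < #{i | d i ≠ c i} := by
  obtain ⟨j, k, hjk, hj, hk, hle⟩ := exists_transfer_indices hpre hsum hne
  set δ := min (d j - c j) (c k - d k)
  have hckj : c k ≤ c j := hc hjk.le
  have hδ₀ : 0 ≤ δ := le_min (by linarith) (by linarith)
  have hδ : δ ≤ d j - d k := by linarith [min_le_left (d j - c j) (c k - d k)]
  refine ⟨d + Pi.single k δ - Pi.single j δ,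
    add_single_sub_single_mem_permutohedron (by linarith) hδ₀ hδ,
    prefixSum_le_add_single_sub_single hjk (min_le_left _ _) hle hpre, ?_,
    card_filter_ne_add_single_sub_single_lt hjk.ne hj.ne' hk.ne (min_choice _ _)⟩
  simp [sum_add_distrib, sum_sub_distrib, hsum]

theorem mem_permutohedron_of_prefixSum_le (hc : Antitone c)
    (hpre : ∀ m, prefixSum c m ≤ prefixSum d m) (hsum : ∑ i, d i = ∑ i, c i) :
    c ∈ permutohedron d := by
  induction hN : #{i | d i ≠ c i} using Nat.strong_induction_on generalizing d with
  | _ N ih =>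
    by_cases hdc : d = c
    · exact hdc ▸ self_mem_permutohedron d
    obtain ⟨d', hd', hpre', hsum', hcard⟩ := exists_transfer_step hc hpre hsum hdc
    exact permutohedron_subset_of_mem hd' (ih _ (hN ▸ hcard) hpre' hsum' rfl)

end PrefixSum

theorem Majorizes.mem_permutohedron {n : ℕ} {u v : Fin n → ℝ} (h : Majorizes u v) :
    v ∈ permutohedron u := by
  obtain ⟨e, he⟩ := exists_perm_sortDesc_eq_comp u
  obtain ⟨f, hf⟩ := exists_perm_sortDesc_eq_comp v
  have hsorted : sortDesc v ∈ permutohedron (sortDesc u) :=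
    mem_permutohedron_of_prefixSum_le (antitone_sortDesc v) h.1
      (by simp only [he, hf, Function.comp_apply, Equiv.sum_comp, h.2])
  have hv := comp_perm_mem_permutohedron_of_mem
    (permutohedron_subset_of_mem (he ▸ comp_perm_mem_permutohedron u e) hsorted) f⁻¹
  rwa [hf, Function.comp_assoc, ← Equiv.Perm.coe_mul, mul_inv_cancel, Equiv.Perm.coe_one,
    Function.comp_id] at hv

theorem exists_perm_weights_of_mem_permutohedron {ι : Type*} {u v : ι → ℝ}
    (hv : v ∈ permutohedron u) :
    ∃ (m : ℕ) (p : Fin m → ℝ) (ρ : Fin m → Equiv.Perm ι),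
      (∀ k, 0 ≤ p k) ∧ ∑ k, p k = 1 ∧ v = ∑ k, p k • (u ∘ ρ k) := by
  obtain ⟨κ, _, w, z, hw₀, hw₁, hz, rfl⟩ := mem_convexHull_iff_exists_fintype.1 hv
  choose ρ hρ using hz
  let e := Fintype.equivFin κ
  refine ⟨Fintype.card κ, w ∘ e.symm, ρ ∘ e.symm, fun k => hw₀ _, ?_, ?_⟩
  · rw [← hw₁, ← e.symm.sum_comp]
    rfl
  · rw [← e.symm.sum_comp]
    simp [hρ]

namespace LinearMap.IsSymmetric

open Module.End

variable {𝕜 E : Type*} [RCLike 𝕜] [NormedAddCommGroup E] [InnerProductSpace 𝕜 E]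
  {A B : E →ₗ[𝕜] E}

theorem apply_eq_re_smul_of_mem_eigenspace (hA : A.IsSymmetric) {μ : 𝕜} {v : E}
    (hv : v ∈ eigenspace A μ) (hv₀ : v ≠ 0) : A v = (RCLike.re μ : 𝕜) • v := by
  rw [RCLike.conj_eq_iff_re.mp (hA.conj_eigenvalue_eq_self (hasEigenvalue_of_hasEigenvector
    ⟨hv, hv₀⟩))]
  exact mem_eigenspace_iff.mp hv

theorem exists_orthonormalBasis_eigenvectors_of_commute [FiniteDimensional 𝕜 E]
    {ι : Type*} [Fintype ι] (hA : A.IsSymmetric) (hB : B.IsSymmetric) (hAB : Commute A B)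
    (hι : Module.finrank 𝕜 E = Fintype.card ι) :
    ∃ (v : OrthonormalBasis ι 𝕜 E) (a b : ι → ℝ),
      ∀ i, A (v i) = (a i : 𝕜) • v i ∧ B (v i) = (b i : 𝕜) • v i := by
  classical
  set V : 𝕜 × 𝕜 → Submodule 𝕜 E := fun q => eigenspace A q.2 ⊓ eigenspace B q.1
  have hV : DirectSum.IsInternal V := hA.directSum_isInternal_of_commute hB hAB
  -- only finitely many joint eigenspaces are nonzero, and they alone already span `E`
  let := hV.submodule_iSupIndep.fintypeNeBotOfFiniteDimensional
  have hV' : DirectSum.IsInternal fun q : {q // V q ≠ ⊥} => V q :=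
    DirectSum.isInternal_ne_bot_iff.2 hV
  have hO : OrthogonalFamily 𝕜 (fun q : {q // V q ≠ ⊥} => V q) fun q => (V q).subtypeₗᵢ :=
    (hA.orthogonalFamily_eigenspace_inf_eigenspace hB).comp Subtype.val_injective
  set q := fun i => hV'.subordinateOrthonormalBasisIndex hι i hO
  set v := hV'.subordinateOrthonormalBasis hι hO
  have hmem : ∀ i, v i ∈ V (q i) := fun i => hV'.subordinateOrthonormalBasis_subordinate hι i hO
  have hv₀ : ∀ i, v i ≠ 0 := fun i => by simpa using v.toBasis.ne_zero i
  refine ⟨v.reindex (Fintype.equivFin ι).symm, fun i => RCLike.re (q (Fintype.equivFin ι i)).1.2,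
    fun i => RCLike.re (q (Fintype.equivFin ι i)).1.1, fun i => ?_⟩
  simp only [OrthonormalBasis.reindex_apply, Equiv.symm_symm]
  exact ⟨hA.apply_eq_re_smul_of_mem_eigenspace (hmem _).1 (hv₀ _),
    hB.apply_eq_re_smul_of_mem_eigenspace (hmem _).2 (hv₀ _)⟩

end LinearMap.IsSymmetric

namespace Matrix

variable {n : Type*} [Fintype n] [DecidableEq n]

theorem eq_mul_diagonal_mul_star_of_mulVec_transpose {R : Type*} [CommRing R] [StarRing R]
    {M U : Matrix n n R} (hU : U ∈ unitaryGroup n R) {α : n → R}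
    (h : ∀ j, M *ᵥ Uᵀ j = α j • Uᵀ j) : M = U * diagonal α * star U := by
  have hMU : M * U = U * diagonal α := by
    ext i j
    rw [mul_diagonal, mul_comm]
    simpa [mul_apply, mulVec, dotProduct] using congrFun (h j) i
  rw [← hMU, Matrix.mul_assoc, Unitary.mul_star_self_of_mem hU, Matrix.mul_one]

theorem IsHermitian.exists_unitary_mulVec_transpose_eq_of_commute {𝕜 : Type*} [RCLike 𝕜]
    {A B : Matrix n n 𝕜} (hA : A.IsHermitian) (hB : B.IsHermitian) (hAB : Commute A B) :
    ∃ U ∈ unitaryGroup n 𝕜, ∃ a b : n → ℝ,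
      ∀ j, A *ᵥ Uᵀ j = (a j : 𝕜) • Uᵀ j ∧ B *ᵥ Uᵀ j = (b j : 𝕜) • Uᵀ j := by
  obtain ⟨v, a, b, hv⟩ :=
    (isSymmetric_toEuclideanLin_iff.mpr hA).exists_orthonormalBasis_eigenvectors_of_commute
      (isSymmetric_toEuclideanLin_iff.mpr hB) (hAB.map (toLpLinAlgEquiv 2))
      finrank_euclideanSpace
  refine ⟨(EuclideanSpace.basisFun n 𝕜).toBasis.toMatrix v,
    (EuclideanSpace.basisFun n 𝕜).toMatrix_orthonormalBasis_mem_unitary v, a, b, fun j => ?_⟩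
  exact ⟨congr(WithLp.ofLp $((hv j).1)), congr(WithLp.ofLp $((hv j).2))⟩

section Unitary

variable {R : Type*} [CommRing R] [StarRing R] {U : Matrix n n R}

theorem permMatrix_mem_unitaryGroup (ρ : Equiv.Perm n) : ρ.permMatrix R ∈ unitaryGroup n R := by
  rw [mem_unitaryGroup_iff, star_eq_conjTranspose, conjTranspose_permMatrix, ← permMatrix_mul,
    inv_mul_cancel, permMatrix_one]

theorem permMatrix_mul_diagonal_mul_star (ρ : Equiv.Perm n) (d : n → R) :
    ρ.permMatrix R * diagonal d * star (ρ.permMatrix R) = diagonal (d ∘ ρ) := by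
  rw [star_eq_conjTranspose, conjTranspose_permMatrix]
  simp [PEquiv.toMatrix_toPEquiv_mul, PEquiv.mul_toMatrix_toPEquiv, Equiv.Perm.inv_def]

theorem mul_permMatrix_mul_star_mulVec_transpose (hU : U ∈ unitaryGroup n R)
    (ρ : Equiv.Perm n) (i : n) :
    (U * ρ.permMatrix R * star U) *ᵥ Uᵀ i = Uᵀ (ρ.symm i) := by
  rw [← col, ← mulVec_single_one, mulVec_mulVec, Matrix.mul_assoc _ (star U),
    Unitary.star_mul_self_of_mem hU, Matrix.mul_one, ← mulVec_mulVec, permMatrix_mulVec,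
    Pi.single_comp_equiv, mulVec_single_one, col]

theorem star_transpose_dotProduct_transpose (hU : U ∈ unitaryGroup n R) (i j : n) :
    star (Uᵀ i) ⬝ᵥ Uᵀ j = if i = j then 1 else 0 := by
  rw [← one_apply, ← Unitary.star_mul_self_of_mem hU]
  rfl

theorem conj_mul_conj_mul_star_conj (hU : U ∈ unitaryGroup n R) (Q D : Matrix n n R) :
    U * Q * star U * (U * D * star U) * star (U * Q * star U) = U * (Q * D * star Q) * star U := by
  have hUU : ∀ X, star U * (U * X) = X := fun X => by
    rw [← Matrix.mul_assoc, Unitary.star_mul_self_of_mem hU, Matrix.one_mul]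
  simp only [star_mul, star_star, Matrix.mul_assoc, hUU]

end Unitary

theorem mul_diagonal_sum_smul_comp_mul_star {ι : Type*} [Fintype ι] {U : Matrix n n ℂ}
    (hU : U ∈ unitaryGroup n ℂ) (p : ι → ℝ) (a : n → ℝ) (ρ : ι → Equiv.Perm n) :
    U * diagonal (fun j => ((∑ k, p k • (a ∘ ρ k)) j : ℂ)) * star U
      = ∑ k, (p k : ℂ) • (U * (ρ k).permMatrix ℂ * star U *
          (U * diagonal (fun j => (a j : ℂ)) * star U) *
          star (U * (ρ k).permMatrix ℂ * star U)) := by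
  have hdiag : (diagonal fun j => ((∑ k, p k • (a ∘ ρ k)) j : ℂ))
      = ∑ k, (p k : ℂ) • diagonal ((fun j => (a j : ℂ)) ∘ ρ k) := by
    ext i j
    by_cases hij : i = j <;> simp [hij, Matrix.sum_apply]
  simp only [conj_mul_conj_mul_star_conj hU, permMatrix_mul_diagonal_mul_star, hdiag, mul_sum,
    sum_mul, Matrix.mul_smul, Matrix.smul_mul]

theorem IsHermitian.map_univ_eigenvalues_eq {𝕜 : Type*} [RCLike 𝕜] {A U : Matrix n n 𝕜}
    (hA : A.IsHermitian) (hU : U ∈ unitaryGroup n 𝕜) {a : n → ℝ}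
    (h : A = U * diagonal (fun i => (a i : 𝕜)) * star U) :
    Finset.univ.val.map hA.eigenvalues = Finset.univ.val.map a := by
  have hroots : ∀ f : n → ℝ,
      (∏ i, (Polynomial.X - Polynomial.C (f i : 𝕜))).roots = (univ.val.map f).map (↑) := by
    intro f
    rw [Polynomial.roots_prod _ _ (prod_ne_zero_iff.2 fun i _ => Polynomial.X_sub_C_ne_zero _)]
    simp
  apply Multiset.map_injective (RCLike.ofReal_injective (K := 𝕜))
  rw [← hroots, ← hroots, ← hA.charpoly_eq, ← charpoly_diagonal, h, charpoly_mul_comm,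
    ← Matrix.mul_assoc, Unitary.star_mul_self_of_mem hU, Matrix.one_mul]

end Matrix

section Measurement

variable {ι n : Type*} [Fintype ι] [Fintype n] [DecidableEq n]

def IsBistochasticMeasurement (f : ι → Matrix n n ℂ) : Prop :=
  ∑ k, (f k)ᴴ * f k = 1 ∧ ∑ k, f k * (f k)ᴴ = 1

theorem ofReal_sqrt_smul_mul_conjTranspose {p : ℝ} (hp : 0 ≤ p) (A B : Matrix n n ℂ) :
    ((√p : ℂ) • A) * ((√p : ℂ) • B)ᴴ = (p : ℂ) • (A * Bᴴ) := by
  simp only [Matrix.conjTranspose_smul, Complex.star_def, Complex.conj_ofReal,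
    smul_mul_smul_comm, ← Complex.ofReal_mul, Real.mul_self_sqrt hp]

theorem isBistochasticMeasurement_sqrt_smul_unitary {p : ι → ℝ} (hp₀ : ∀ k, 0 ≤ p k)
    (hp₁ : ∑ k, p k = 1) {P : ι → Matrix n n ℂ} (hP : ∀ k, P k ∈ unitaryGroup n ℂ) :
    IsBistochasticMeasurement fun k => (√(p k) : ℂ) • P k := by
  have hsum : ∑ k, (p k : ℂ) • (1 : Matrix n n ℂ) = 1 := by
    rw [← sum_smul, ← Complex.ofReal_sum, hp₁, Complex.ofReal_one, one_smul]
  constructor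
  · convert hsum using 2 with k
    rw [Matrix.conjTranspose_smul, Complex.star_def, Complex.conj_ofReal, smul_mul_smul_comm,
      ← Complex.ofReal_mul, Real.mul_self_sqrt (hp₀ k), ← Matrix.star_eq_conjTranspose,
      Unitary.star_mul_self_of_mem (hP k)]
  · convert hsum using 2 with k
    rw [ofReal_sqrt_smul_mul_conjTranspose (hp₀ k), ← Matrix.star_eq_conjTranspose,
      Unitary.mul_star_self_of_mem (hP k)]

theorem sum_sqrt_smul_mul_mul_conjTranspose {p : ι → ℝ} (hp₀ : ∀ k, 0 ≤ p k)
    (P : ι → Matrix n n ℂ) (σ : Matrix n n ℂ) :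
    ∑ k, ((√(p k) : ℂ) • P k) * σ * ((√(p k) : ℂ) • P k)ᴴ
      = ∑ k, (p k : ℂ) • (P k * σ * (P k)ᴴ) := by
  refine sum_congr rfl fun k _ => ?_
  rw [smul_mul_assoc, ofReal_sqrt_smul_mul_conjTranspose (hp₀ k)]

end Measurement

open Matrix in
theorem exists_permutation_mixture_of_commuting_majorizes_general {n : ℕ}
    (σ τ : Matrix (Fin n) (Fin n) ℂ)
    (hσ : σ.PosSemidef)
    (hτ : τ.PosSemidef)
    (hcomm : σ * τ = τ * σ)
    (hmaj : Majorizes (hσ.1.eigenvalues) (hτ.1.eigenvalues)) :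
    ∃ (m : ℕ) (p : Fin m → ℝ) (P : Fin m → Matrix (Fin n) (Fin n) ℂ)
      (x : Fin n → (Fin n → ℂ)) (π : Fin m → Equiv.Perm (Fin n)),
      (∀ k, 0 ≤ p k) ∧ (∑ k, p k = 1) ∧
      (∀ i j, dotProduct (star (x i)) (x j) = if i = j then 1 else 0) ∧
      (∀ i, ∃ c : ℂ, σ.mulVec (x i) = c • x i) ∧
      (∀ i, ∃ c : ℂ, τ.mulVec (x i) = c • x i) ∧
      (∀ k, P k ∈ Matrix.unitaryGroup (Fin n) ℂ) ∧
      (∀ k i, (P k).mulVec (x i) = x (π k i)) ∧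
      (τ = ∑ k, (p k : ℂ) • (P k * σ * (P k)ᴴ)) ∧
      (∑ k, ((Real.sqrt (p k) : ℂ) • P k)ᴴ * ((Real.sqrt (p k) : ℂ) • P k) = 1) ∧
      (∑ k, ((Real.sqrt (p k) : ℂ) • P k) * ((Real.sqrt (p k) : ℂ) • P k)ᴴ = 1) ∧
      (τ = ∑ k, ((Real.sqrt (p k) : ℂ) • P k) * σ * ((Real.sqrt (p k) : ℂ) • P k)ᴴ) := by
  obtain ⟨U, hU, a, b, hab⟩ := hσ.1.exists_unitary_mulVec_transpose_eq_of_commute hτ.1 hcomm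
  -- `α` is given so that the diagonals carry `Complex.ofReal` rather than the `RCLike` coercion
  have hσU := eq_mul_diagonal_mul_star_of_mulVec_transpose (α := fun j => (a j : ℂ)) hU
    fun j => (hab j).1
  have hτU := eq_mul_diagonal_mul_star_of_mulVec_transpose (α := fun j => (b j : ℂ)) hU
    fun j => (hab j).2
  obtain ⟨m, p, ρ, hp₀, hp₁, rfl⟩ := exists_perm_weights_of_mem_permutohedron
    (hmaj.of_map_univ_eq (hσ.1.map_univ_eigenvalues_eq hU hσU)
      (hτ.1.map_univ_eigenvalues_eq hU hτU)).mem_permutohedron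
  set P := fun k => U * (ρ k).permMatrix ℂ * star U
  have hP : ∀ k, P k ∈ unitaryGroup (Fin n) ℂ := fun k =>
    mul_mem (mul_mem hU (permMatrix_mem_unitaryGroup _)) (Unitary.star_mem hU)
  have hmix : τ = ∑ k, (p k : ℂ) • (P k * σ * (P k)ᴴ) := by
    rw [hτU, mul_diagonal_sum_smul_comp_mul_star hU, ← hσU]
    rfl
  exact ⟨m, p, P, fun i => Uᵀ i, fun k => (ρ k).symm, hp₀, hp₁,
    star_transpose_dotProduct_transpose hU, fun i => ⟨_, (hab i).1⟩, fun i => ⟨_, (hab i).2⟩, hP,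
    fun k i => mul_permMatrix_mul_star_mulVec_transpose hU (ρ k) i, hmix,
    (isBistochasticMeasurement_sqrt_smul_unitary hp₀ hp₁ hP).1,
    (isBistochasticMeasurement_sqrt_smul_unitary hp₀ hp₁ hP).2,
    hmix.trans (sum_sqrt_smul_mul_mul_conjTranspose hp₀ P σ).symm⟩

open Matrix in
/-- If `σ` and `τ` are commuting density matrices with `σ ⪰ τ`, then there are weights
`p k` and unitary operators `P k` permuting a common orthonormal eigenbasis of `σ` and `τ`
such that `τ = ∑ k, p k • P k σ (P k)ᴴ`, and the family `f k = √(p k) • P k` is a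
bi-stochastic measurement realizing `τ` from `σ`. -/
theorem exists_permutation_mixture_of_commuting_majorizes {n : ℕ}
    (σ τ : Matrix (Fin n) (Fin n) ℂ)
    (hσ : σ.PosSemidef) (hσtr : σ.trace = 1)
    (hτ : τ.PosSemidef) (hτtr : τ.trace = 1)
    (hcomm : σ * τ = τ * σ)
    (hmaj : Majorizes (hσ.1.eigenvalues) (hτ.1.eigenvalues)) :
    ∃ (m : ℕ) (p : Fin m → ℝ) (P : Fin m → Matrix (Fin n) (Fin n) ℂ)
      (x : Fin n → (Fin n → ℂ)) (π : Fin m → Equiv.Perm (Fin n)),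
      (∀ k, 0 ≤ p k) ∧ (∑ k, p k = 1) ∧
      (∀ i j, dotProduct (star (x i)) (x j) = if i = j then 1 else 0) ∧
      (∀ i, ∃ c : ℂ, σ.mulVec (x i) = c • x i) ∧
      (∀ i, ∃ c : ℂ, τ.mulVec (x i) = c • x i) ∧
      (∀ k, P k ∈ Matrix.unitaryGroup (Fin n) ℂ) ∧
      (∀ k i, (P k).mulVec (x i) = x (π k i)) ∧
      (τ = ∑ k, (p k : ℂ) • (P k * σ * (P k)ᴴ)) ∧
      (∑ k, ((Real.sqrt (p k) : ℂ) • P k)ᴴ * ((Real.sqrt (p k) : ℂ) • P k) = 1) ∧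
      (∑ k, ((Real.sqrt (p k) : ℂ) • P k) * ((Real.sqrt (p k) : ℂ) • P k)ᴴ = 1) ∧
      (τ = ∑ k, ((Real.sqrt (p k) : ℂ) • P k) * σ * ((Real.sqrt (p k) : ℂ) • P k)ᴴ) :=
  exists_permutation_mixture_of_commuting_majorizes_general σ τ hσ hτ hcomm hmaj
end

section
/- Let σ be a state on H₁ ⊗ H₂ and {f_k} a measurement on H₁ with g_k = f_k ⊗ Id_{H₂}. Then the sum of the decreasingly ordered spectra of the partial traces Σ_k Sp(Tr_{H₁}(g_k σ g_k*)) majorizes Sp(Tr_{H₁}(σ)): a local measurement by Alice weakly increases Bob's expected local spectrum in the majorization order. -/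
/-
Alice's measurement does not change Bob's reduced state: the partial trace over the first
factor commutes with `X ⊗ₖ 1`, so `∑ₖ Tr₁ (gₖ σ gₖᴴ) = Tr₁ (σ (∑ₖ fₖᴴ fₖ ⊗ₖ 1)) = Tr₁ σ`.
It therefore suffices that the spectrum of a sum `B = ∑ₖ Aₖ` of Hermitian matrices is majorized
by the sum of the decreasingly ordered spectra of the `Aₖ`. This is Ky Fan's maximum principle:
the sum of the `K` largest eigenvalues of `A` bounds `re tr (P A)` for every `0 ≤ P ≤ 1` with
`tr P = K` (in the eigenbasis of `A` this is a rearrangement inequality for the diagonal of `P`),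
with equality at the spectral projection onto the top `K` eigenvectors. Taking that projection
for `B` and bounding each `re tr (P Aₖ)` gives the partial-sum inequalities; the totals agree
because both are `re tr B`.
-/

open scoped ComplexOrder

open Matrix

/-- Partial trace over the first tensor factor. -/
noncomputable def ptraceLeft {n₁ n₂ : ℕ} (M : Matrix (Fin n₁ × Fin n₂) (Fin n₁ × Fin n₂) ℂ) :
    Matrix (Fin n₂) (Fin n₂) ℂ :=
  Matrix.of fun i j => ∑ k, M (k, i) (k, j)

open Finset

def finPrefix (n K : ℕ) : Finset (Fin n) := univ.filter fun i => (i : ℕ) < K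

noncomputable def descPerm {n : ℕ} (u : Fin n → ℝ) : Equiv.Perm (Fin n) :=
  Fin.revPerm.trans (Tuple.sort u)

lemma sortDesc_antitone {n : ℕ} (u : Fin n → ℝ) : Antitone (sortDesc u) :=
  fun _ _ hij => Tuple.monotone_sort u (Fin.rev_le_rev.mpr hij)

lemma sum_sortDesc {n : ℕ} (u : Fin n → ℝ) : ∑ i, sortDesc u i = ∑ i, u i :=
  Fintype.sum_equiv (descPerm u) _ _ fun _ => rfl

lemma sortDesc_of_antitone {n : ℕ} {u : Fin n → ℝ} (hu : Antitone u) : sortDesc u = u := by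
  have hmono : Monotone (u ∘ Fin.revPerm) := fun _ _ hij => hu (Fin.rev_le_rev.mpr hij)
  funext i
  simpa [sortDesc] using (congrFun (Tuple.comp_sort_eq_comp_iff_monotone.mpr hmono) i.rev).symm

lemma exists_threshold_finPrefix {n : ℕ} {d : Fin n → ℝ} (hd : Antitone d) (K : ℕ) :
    ∃ t, (∀ j ∈ finPrefix n K, t ≤ d j) ∧ ∀ j ∉ finPrefix n K, d j ≤ t := by
  by_cases hK : K < n
  · refine ⟨d ⟨K, hK⟩, fun j hj => hd ?_, fun j hj => hd ?_⟩
    · simp only [finPrefix, mem_filter, mem_univ, true_and] at hj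
      exact Fin.mk_le_of_le_val hj.le
    · simp only [finPrefix, mem_filter, mem_univ, true_and, not_lt] at hj
      exact Fin.le_def.mpr hj
  · obtain ⟨t, ht⟩ := (Set.finite_range d).bddBelow
    refine ⟨t, fun j _ => ht ⟨j, rfl⟩, fun j hj => absurd ?_ hj⟩
    simp only [finPrefix, mem_filter, mem_univ, true_and]
    omega

lemma sum_mul_le_sum_of_threshold {ι : Type*} [Fintype ι] [DecidableEq ι] {d b : ι → ℝ}
    {s : Finset ι} {t : ℝ} (hs : ∀ j ∈ s, t ≤ d j) (hsc : ∀ j ∉ s, d j ≤ t)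
    (hb0 : ∀ j, 0 ≤ b j) (hb1 : ∀ j, b j ≤ 1) (hb : ∑ j, b j = #s) :
    ∑ j, d j * b j ≤ ∑ j ∈ s, d j := by
  have hpoint : ∀ j, d j * b j ≤ t * b j + (if j ∈ s then d j - t else 0) := by
    intro j
    split_ifs with hj
    · nlinarith [hs j hj, hb1 j]
    · nlinarith [hsc j hj, hb0 j]
  calc ∑ j, d j * b j ≤ ∑ j, (t * b j + (if j ∈ s then d j - t else 0)) :=
        sum_le_sum fun j _ => hpoint j
    _ = t * #s + ∑ j ∈ s, (d j - t) := by
        rw [sum_add_distrib, ← mul_sum, hb, sum_ite_mem, univ_inter]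
    _ = ∑ j ∈ s, d j := by
        rw [sum_sub_distrib, sum_const, nsmul_eq_mul]; ring

lemma sum_mul_le_sum_finPrefix_sortDesc {n : ℕ} (u b : Fin n → ℝ) (K : ℕ) (hb0 : ∀ j, 0 ≤ b j)
    (hb1 : ∀ j, b j ≤ 1) (hb : ∑ j, b j = #(finPrefix n K)) :
    ∑ j, u j * b j ≤ ∑ i ∈ finPrefix n K, sortDesc u i := by
  obtain ⟨t, hs, hsc⟩ := exists_threshold_finPrefix (sortDesc_antitone u) K
  calc ∑ j, u j * b j = ∑ i, sortDesc u i * (b ∘ descPerm u) i :=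
        (Fintype.sum_equiv (descPerm u) _ _ fun _ => rfl).symm
    _ ≤ _ := sum_mul_le_sum_of_threshold hs hsc (fun _ => hb0 _) (fun _ => hb1 _)
        (by rw [← hb]; exact Fintype.sum_equiv (descPerm u) _ _ fun _ => rfl)

namespace Matrix.IsHermitian

variable {𝕜 ι : Type*} [RCLike 𝕜] [Fintype ι] [DecidableEq ι] {A : Matrix ι ι 𝕜}

lemma star_eigenvectorUnitary_mul_self (hA : A.IsHermitian) :
    star (hA.eigenvectorUnitary : Matrix ι ι 𝕜) * hA.eigenvectorUnitary = 1 :=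
  Unitary.star_mul_self_of_mem hA.eigenvectorUnitary.prop

lemma eigenvectorUnitary_mul_star_self (hA : A.IsHermitian) :
    (hA.eigenvectorUnitary : Matrix ι ι 𝕜) * star (hA.eigenvectorUnitary : Matrix ι ι 𝕜) = 1 :=
  Unitary.mul_star_self_of_mem hA.eigenvectorUnitary.prop

lemma re_trace_mul_eq_sum_eigenvalues_mul (hA : A.IsHermitian) (P : Matrix ι ι 𝕜) :
    RCLike.re (P * A).trace =
      ∑ j, hA.eigenvalues j * RCLike.re ((star (hA.eigenvectorUnitary : Matrix ι ι 𝕜) * P *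
        hA.eigenvectorUnitary) j j) := by
  set V : Matrix ι ι 𝕜 := (hA.eigenvectorUnitary : Matrix ι ι 𝕜)
  have hA' : A = V * diagonal (RCLike.ofReal ∘ hA.eigenvalues) * star V := by
    simpa using hA.spectral_theorem
  have htr :
      (P * A).trace = (star V * P * V * diagonal (RCLike.ofReal ∘ hA.eigenvalues)).trace := by
    conv_lhs => rw [hA', ← Matrix.mul_assoc, ← Matrix.mul_assoc, trace_mul_cycle]
    simp only [Matrix.mul_assoc]
  rw [htr, trace, map_sum]
  refine sum_congr rfl fun j _ => ?_
  rw [diag_apply, mul_diagonal, Function.comp_apply, RCLike.re_mul_ofReal, mul_comm]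

lemma sum_eigenvalues_eq_re_trace (hA : A.IsHermitian) :
    ∑ i, hA.eigenvalues i = RCLike.re A.trace := by
  simp [hA.trace_eq_sum_eigenvalues]

noncomputable def eigenprojection (hA : A.IsHermitian) (s : Finset ι) : Matrix ι ι 𝕜 :=
  (hA.eigenvectorUnitary : Matrix ι ι 𝕜) * diagonal (fun j => if j ∈ s then 1 else 0) *
    star (hA.eigenvectorUnitary : Matrix ι ι 𝕜)

lemma posSemidef_eigenprojection (hA : A.IsHermitian) (s : Finset ι) :
    (hA.eigenprojection s).PosSemidef :=
  (PosSemidef.diagonal fun j => by dsimp only [Pi.zero_apply]; split_ifs <;> simp)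
    |>.mul_mul_conjTranspose_same _

lemma posSemidef_one_sub_eigenprojection (hA : A.IsHermitian) (s : Finset ι) :
    (1 - hA.eigenprojection s).PosSemidef := by
  set V : Matrix ι ι 𝕜 := (hA.eigenvectorUnitary : Matrix ι ι 𝕜)
  have h : 1 - hA.eigenprojection s =
      V * diagonal (fun j => 1 - if j ∈ s then 1 else 0) * star V := by
    rw [eigenprojection, ← diagonal_one, ← diagonal_sub, diagonal_one, Matrix.mul_sub,
      Matrix.sub_mul, Matrix.mul_one, eigenvectorUnitary_mul_star_self]
  rw [h]
  exact (PosSemidef.diagonal fun j => by dsimp only [Pi.zero_apply]; split_ifs <;> simp)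
    |>.mul_mul_conjTranspose_same _

lemma star_mul_eigenprojection_mul (hA : A.IsHermitian) (s : Finset ι) :
    star (hA.eigenvectorUnitary : Matrix ι ι 𝕜) * hA.eigenprojection s *
      (hA.eigenvectorUnitary : Matrix ι ι 𝕜) =
      diagonal (fun j => if j ∈ s then 1 else 0) := by
  simp only [eigenprojection, ← Matrix.mul_assoc, star_eigenvectorUnitary_mul_self, Matrix.one_mul]
  simp only [Matrix.mul_assoc, star_eigenvectorUnitary_mul_self, Matrix.mul_one]

lemma trace_eigenprojection (hA : A.IsHermitian) (s : Finset ι) :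
    (hA.eigenprojection s).trace = #s := by
  rw [eigenprojection, trace_mul_cycle, star_eigenvectorUnitary_mul_self, Matrix.one_mul,
    trace_diagonal, sum_boole, Finset.filter_mem_eq_inter, univ_inter]

lemma re_trace_eigenprojection_mul (hA : A.IsHermitian) (s : Finset ι) :
    RCLike.re (hA.eigenprojection s * A).trace = ∑ j ∈ s, hA.eigenvalues j := by
  rw [hA.re_trace_mul_eq_sum_eigenvalues_mul, star_mul_eigenprojection_mul]
  simp [apply_ite RCLike.re]

lemma re_trace_mul_le_sum_finPrefix_sortDesc {n K : ℕ} {A P : Matrix (Fin n) (Fin n) 𝕜}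
    (hA : A.IsHermitian) (hP : P.PosSemidef) (hP1 : (1 - P).PosSemidef)
    (htr : P.trace = #(finPrefix n K)) :
    RCLike.re (P * A).trace ≤ ∑ i ∈ finPrefix n K, sortDesc hA.eigenvalues i := by
  set V : Matrix (Fin n) (Fin n) 𝕜 := (hA.eigenvectorUnitary : Matrix (Fin n) (Fin n) 𝕜)
  have hQ : (star V * P * V).PosSemidef := hP.conjTranspose_mul_mul_same V
  have hQ1 : (1 - star V * P * V).PosSemidef := by
    have h : star V * (1 - P) * V = 1 - star V * P * V := by
      rw [Matrix.mul_sub, Matrix.sub_mul, Matrix.mul_one, star_eigenvectorUnitary_mul_self]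
    exact h ▸ hP1.conjTranspose_mul_mul_same V
  rw [hA.re_trace_mul_eq_sum_eigenvalues_mul]
  refine sum_mul_le_sum_finPrefix_sortDesc _ _ K (fun j => ?_) (fun j => ?_) ?_
  · exact (RCLike.nonneg_iff.mp hQ.diag_nonneg).1
  · have := (RCLike.nonneg_iff.mp (hQ1.diag_nonneg (i := j))).1
    simpa [sub_apply] using this
  · rw [← map_sum]
    change RCLike.re (star V * P * V).trace = _
    rw [trace_mul_cycle, eigenvectorUnitary_mul_star_self, Matrix.one_mul, htr]
    simp

end Matrix.IsHermitian

section KyFan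

variable {𝕜 : Type*} [RCLike 𝕜] {n m : ℕ}

lemma sum_finPrefix_sortDesc_eigenvalues_le {A : Fin m → Matrix (Fin n) (Fin n) 𝕜}
    {B : Matrix (Fin n) (Fin n) 𝕜} (hA : ∀ k, (A k).IsHermitian) (hB : B.IsHermitian)
    (hsum : ∑ k, A k = B) (K : ℕ) :
    ∑ i ∈ finPrefix n K, sortDesc hB.eigenvalues i ≤
      ∑ i ∈ finPrefix n K, ∑ k, sortDesc (hA k).eigenvalues i := by
  set P := hB.eigenprojection ((finPrefix n K).map (descPerm hB.eigenvalues).toEmbedding)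
  have htr : P.trace = #(finPrefix n K) := by rw [hB.trace_eigenprojection, card_map]
  calc ∑ i ∈ finPrefix n K, sortDesc hB.eigenvalues i = RCLike.re (P * B).trace := by
        rw [hB.re_trace_eigenprojection_mul, sum_map]; rfl
    _ = ∑ k, RCLike.re (P * A k).trace := by rw [← hsum, mul_sum, trace_sum, map_sum]
    _ ≤ ∑ k, ∑ i ∈ finPrefix n K, sortDesc (hA k).eigenvalues i :=
        sum_le_sum fun k _ => (hA k).re_trace_mul_le_sum_finPrefix_sortDesc
          (hB.posSemidef_eigenprojection _) (hB.posSemidef_one_sub_eigenprojection _) htr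
    _ = _ := sum_comm

theorem majorizes_sum_sortDesc_eigenvalues {A : Fin m → Matrix (Fin n) (Fin n) 𝕜}
    {B : Matrix (Fin n) (Fin n) 𝕜} (hA : ∀ k, (A k).IsHermitian) (hB : B.IsHermitian)
    (hsum : ∑ k, A k = B) :
    Majorizes (fun i => ∑ k, sortDesc (hA k).eigenvalues i) hB.eigenvalues := by
  have hanti : Antitone fun i => ∑ k, sortDesc (hA k).eigenvalues i :=
    fun i j hij => sum_le_sum fun k _ => sortDesc_antitone _ hij
  refine ⟨fun K => ?_, ?_⟩
  · rw [sortDesc_of_antitone hanti]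
    exact sum_finPrefix_sortDesc_eigenvalues_le hA hB hsum K
  · calc ∑ i, ∑ k, sortDesc (hA k).eigenvalues i = ∑ k, RCLike.re (A k).trace := by
          rw [sum_comm]
          exact sum_congr rfl fun k _ => (sum_sortDesc _).trans (hA k).sum_eigenvalues_eq_re_trace
      _ = ∑ i, hB.eigenvalues i := by
          rw [hB.sum_eigenvalues_eq_re_trace, ← hsum, trace_sum, map_sum]

end KyFan

section PartialTrace

open Kronecker

lemma sum_kronecker {ι R l m n p : Type*} [NonUnitalNonAssocSemiring R] (s : Finset ι)
    (X : ι → Matrix l m R) (Y : Matrix n p R) : (∑ k ∈ s, X k) ⊗ₖ Y = ∑ k ∈ s, X k ⊗ₖ Y := by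
  ext ⟨a, i⟩ ⟨b, j⟩
  simp only [kroneckerMap_apply, Matrix.sum_apply, sum_mul]

variable {n₁ n₂ : ℕ}

lemma ptraceLeft_sum {ι : Type*} (s : Finset ι)
    (M : ι → Matrix (Fin n₁ × Fin n₂) (Fin n₁ × Fin n₂) ℂ) :
    ptraceLeft (∑ k ∈ s, M k) = ∑ k ∈ s, ptraceLeft (M k) := by
  ext i j
  simp only [ptraceLeft, of_apply, Matrix.sum_apply]
  exact sum_comm

lemma ptraceLeft_kronecker_one_mul (X : Matrix (Fin n₁) (Fin n₁) ℂ)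
    (M : Matrix (Fin n₁ × Fin n₂) (Fin n₁ × Fin n₂) ℂ) :
    ptraceLeft ((X ⊗ₖ (1 : Matrix (Fin n₂) (Fin n₂) ℂ)) * M) =
      ptraceLeft (M * (X ⊗ₖ (1 : Matrix (Fin n₂) (Fin n₂) ℂ))) := by
  ext i j
  simp only [ptraceLeft, of_apply, mul_apply, Fintype.sum_prod_type, kroneckerMap_apply,
    one_apply, mul_ite, ite_mul, mul_zero, zero_mul, mul_one, sum_ite_eq, sum_ite_eq', mem_univ,
    if_true]
  rw [sum_comm]
  exact sum_congr rfl fun a _ => sum_congr rfl fun b _ => mul_comm _ _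

lemma ptraceLeft_conj_kronecker_one (X : Matrix (Fin n₁) (Fin n₁) ℂ)
    (M : Matrix (Fin n₁ × Fin n₂) (Fin n₁ × Fin n₂) ℂ) :
    ptraceLeft ((X ⊗ₖ (1 : Matrix (Fin n₂) (Fin n₂) ℂ)) * M *
        (X ⊗ₖ (1 : Matrix (Fin n₂) (Fin n₂) ℂ))ᴴ) =
      ptraceLeft (M * ((Xᴴ * X) ⊗ₖ (1 : Matrix (Fin n₂) (Fin n₂) ℂ))) := by
  rw [conjTranspose_kronecker, conjTranspose_one, Matrix.mul_assoc, ptraceLeft_kronecker_one_mul,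
    Matrix.mul_assoc, ← mul_kronecker_mul, Matrix.one_mul]

lemma sum_ptraceLeft_conj_kronecker_one {ι : Type*} [Fintype ι]
    (f : ι → Matrix (Fin n₁) (Fin n₁) ℂ) (hf : ∑ k, (f k)ᴴ * f k = 1)
    (M : Matrix (Fin n₁ × Fin n₂) (Fin n₁ × Fin n₂) ℂ) :
    ∑ k, ptraceLeft ((f k ⊗ₖ (1 : Matrix (Fin n₂) (Fin n₂) ℂ)) * M *
        (f k ⊗ₖ (1 : Matrix (Fin n₂) (Fin n₂) ℂ))ᴴ) = ptraceLeft M := by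
  simp only [ptraceLeft_conj_kronecker_one]
  rw [← ptraceLeft_sum, ← mul_sum, ← sum_kronecker, hf, one_kronecker_one, Matrix.mul_one]

end PartialTrace

open Kronecker in
theorem local_measurement_expected_spectrum_majorizes_general {n₁ n₂ m : ℕ}
    (σ : Matrix (Fin n₁ × Fin n₂) (Fin n₁ × Fin n₂) ℂ)
    (f : Fin m → Matrix (Fin n₁) (Fin n₁) ℂ)
    (hpovm : ∑ k, (f k)ᴴ * f k = 1)
    (g : Fin m → Matrix (Fin n₁ × Fin n₂) (Fin n₁ × Fin n₂) ℂ)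
    (hg : ∀ k, g k = (f k) ⊗ₖ (1 : Matrix (Fin n₂) (Fin n₂) ℂ))
    (hherm : ∀ k, (ptraceLeft (g k * σ * (g k)ᴴ)).IsHermitian)
    (hherm0 : (ptraceLeft σ).IsHermitian) :
    Majorizes (fun i => ∑ k, sortDesc ((hherm k).eigenvalues) i)
      (hherm0.eigenvalues) :=
  majorizes_sum_sortDesc_eigenvalues hherm hherm0 <| by
    simpa only [hg] using sum_ptraceLeft_conj_kronecker_one f hpovm σ

open Kronecker in
/-- A local measurement by Alice weakly increases Bob's expected local spectrum in the
majorization order: `∑ k, Sp(Tr_{H₁}(g k σ (g k)ᴴ)) ⪰ Sp(Tr_{H₁} σ)`. -/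
theorem local_measurement_expected_spectrum_majorizes {n₁ n₂ m : ℕ}
    (σ : Matrix (Fin n₁ × Fin n₂) (Fin n₁ × Fin n₂) ℂ)
    (hσ : σ.PosSemidef) (hσtr : σ.trace = 1)
    (f : Fin m → Matrix (Fin n₁) (Fin n₁) ℂ)
    (hpovm : ∑ k, (f k)ᴴ * f k = 1)
    (g : Fin m → Matrix (Fin n₁ × Fin n₂) (Fin n₁ × Fin n₂) ℂ)
    (hg : ∀ k, g k = (f k) ⊗ₖ (1 : Matrix (Fin n₂) (Fin n₂) ℂ))
    (hherm : ∀ k, (ptraceLeft (g k * σ * (g k)ᴴ)).IsHermitian)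
    (hherm0 : (ptraceLeft σ).IsHermitian) :
    Majorizes (fun i => ∑ k, sortDesc ((hherm k).eigenvalues) i)
      (hherm0.eigenvalues) :=
  local_measurement_expected_spectrum_majorizes_general σ f hpovm g hg hherm hherm0
end
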